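/- Let N ∈ S^m be a fixed unit vector and let Λ₀ be a nonempty compact subset of the equator {y ∈ S^m : ⟨y, N⟩ = 0}, and let f : Λ₀ → ℝ be 1-Lipschitz. If there exists a point x ∈ S^m with ⟨x, N⟩ > 0 such that f⁺(x) = f⁻(x), then Λ₀ is purely lightlike: there exists x₀ ∈ Λ₀ with −x₀ ∈ Λ₀ and f(x₀) = f(−x₀) + π. -/

import Mathlib

open scoped RealInnerProductSpace
open Real

/-- Spherical (geodesic) distance between unit vectors of a Euclidean space:
`d(x,y) = arccos⟨x,y⟩`. -/
noncomputable def sphDist {m : ℕ} (x y : EuclideanSpace ℝ (Fin m)) : ℝ :=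
  Real.arccos ⟪x, y⟫

/-- `f⁻(x) = sup_{y ∈ Λ₀} (f(y) − d(x,y))`. -/
noncomputable def fminus {m : ℕ} (Λ₀ : Set (EuclideanSpace ℝ (Fin m)))
    (f : EuclideanSpace ℝ (Fin m) → ℝ) (x : EuclideanSpace ℝ (Fin m)) : ℝ :=
  sSup ((fun y => f y - sphDist x y) '' Λ₀)

/-- `f⁺(x) = inf_{y ∈ Λ₀} (f(y) + d(x,y))`. -/
noncomputable def fplus {m : ℕ} (Λ₀ : Set (EuclideanSpace ℝ (Fin m)))
    (f : EuclideanSpace ℝ (Fin m) → ℝ) (x : EuclideanSpace ℝ (Fin m)) : ℝ :=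
  sInf ((fun y => f y + sphDist x y) '' Λ₀)

/-!
Take `y₀ ∈ Λ₀` realising `f⁻(x)` and `z₀ ∈ Λ₀` realising `f⁺(x)` (they exist since `f` is
continuous and `Λ₀` compact). From `f⁺(x) = f⁻(x)` and the Lipschitz bound,
`d(y₀,x) + d(x,z₀) ≤ f(y₀) - f(z₀) ≤ d(y₀,z₀)`, so the angle triangle inequality is an equality
and `x` is either in the cone spanned by `y₀, z₀` or `y₀, z₀` are antipodal. The cone lies in the
equator while `⟨x,N⟩ > 0`, so `z₀ = -y₀`, and then both inequalities are equalities with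
value `π`.
-/

open InnerProductGeometry

section Angle

variable {V : Type*} [NormedAddCommGroup V] [InnerProductSpace ℝ V]

theorem angle_eq_pi_of_angle_add_angle_le {N x y z : V} (hy : ⟪y, N⟫ = 0) (hz : ⟪z, N⟫ = 0)
    (hx : 0 < ⟪x, N⟫) (h : angle y x + angle x z ≤ angle y z) : angle y z = π := by
  have hx0 : x ≠ 0 := by rintro rfl; simp at hx
  have heq : angle y z = angle y x + angle x z := le_antisymm (angle_le_angle_add_angle y x z) h
  refine ((angle_eq_angle_add_angle_iff hx0).mp heq).resolve_right fun hmem => hx.ne' ?_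
  obtain ⟨a, b, rfl⟩ := Submodule.mem_span_pair.mp hmem
  simp [inner_add_left, NNReal.smul_def, real_inner_smul_left, hy, hz]

theorem eq_neg_of_angle_eq_pi {y z : V} (hy : ‖y‖ = 1) (hz : ‖z‖ = 1) (h : angle y z = π) :
    z = -y := by
  obtain ⟨-, r, hr, rfl⟩ := angle_eq_pi_iff.mp h
  rw [norm_smul, hy, mul_one, Real.norm_of_nonpos hr.le] at hz
  rw [show r = -1 by linarith, neg_one_smul]

end Angle

section SphDist

variable {m : ℕ}

theorem sphDist_eq_angle {x y : EuclideanSpace ℝ (Fin m)} (hx : ‖x‖ = 1) (hy : ‖y‖ = 1) :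
    sphDist x y = angle x y := by
  rw [sphDist, angle, hx, hy, one_mul, div_one]

theorem sphDist_comm (x y : EuclideanSpace ℝ (Fin m)) : sphDist x y = sphDist y x := by
  rw [sphDist, sphDist, real_inner_comm]

theorem continuous_sphDist_right (x : EuclideanSpace ℝ (Fin m)) : Continuous (sphDist x) :=
  continuous_arccos.comp (continuous_const.inner continuous_id)

theorem continuousOn_of_abs_sub_le_sphDist {Λ₀ : Set (EuclideanSpace ℝ (Fin m))}
    (hΛ₀ : ∀ y ∈ Λ₀, ‖y‖ = 1) {f : EuclideanSpace ℝ (Fin m) → ℝ}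
    (hf : ∀ y ∈ Λ₀, ∀ z ∈ Λ₀, |f y - f z| ≤ sphDist y z) : ContinuousOn f Λ₀ := by
  intro z hz
  have hdist : Filter.Tendsto (sphDist z) (nhdsWithin z Λ₀) (nhds 0) := by
    have hzz : sphDist z z = 0 := by
      rw [sphDist, real_inner_self_eq_norm_sq, hΛ₀ z hz, one_pow, arccos_one]
    simpa [hzz] using ((continuous_sphDist_right z).tendsto z).mono_left nhdsWithin_le_nhds
  rw [ContinuousWithinAt, ← tendsto_sub_nhds_zero_iff]
  refine squeeze_zero_norm' ?_ hdist
  filter_upwards [self_mem_nhdsWithin] with y hy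
  rw [Real.norm_eq_abs, sphDist_comm]
  exact hf y hy z hz

variable {Λ₀ : Set (EuclideanSpace ℝ (Fin m))} {f : EuclideanSpace ℝ (Fin m) → ℝ}

theorem exists_eq_fminus (hcpt : IsCompact Λ₀) (hne : Λ₀.Nonempty) (hf : ContinuousOn f Λ₀)
    (x : EuclideanSpace ℝ (Fin m)) : ∃ y ∈ Λ₀, f y - sphDist x y = fminus Λ₀ f x :=
  (hcpt.image_of_continuousOn (hf.sub (continuous_sphDist_right x).continuousOn)).sSup_mem
    (hne.image _)

theorem exists_eq_fplus (hcpt : IsCompact Λ₀) (hne : Λ₀.Nonempty) (hf : ContinuousOn f Λ₀)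
    (x : EuclideanSpace ℝ (Fin m)) : ∃ z ∈ Λ₀, f z + sphDist x z = fplus Λ₀ f x :=
  (hcpt.image_of_continuousOn (hf.add (continuous_sphDist_right x).continuousOn)).sInf_mem
    (hne.image _)

end SphDist

theorem stmt5_general (m : ℕ) (N : EuclideanSpace ℝ (Fin (m + 1)))
    (Λ₀ : Set (EuclideanSpace ℝ (Fin (m + 1))))
    (hsub : ∀ y ∈ Λ₀, ‖y‖ = 1 ∧ ⟪y, N⟫ = 0)
    (hne : Λ₀.Nonempty) (hcpt : IsCompact Λ₀)
    (f : EuclideanSpace ℝ (Fin (m + 1)) → ℝ)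
    (hf : ∀ y ∈ Λ₀, ∀ z ∈ Λ₀, |f y - f z| ≤ sphDist y z)
    (x : EuclideanSpace ℝ (Fin (m + 1))) (hx : ‖x‖ = 1) (hxN : 0 < ⟪x, N⟫)
    (heq : fplus Λ₀ f x = fminus Λ₀ f x) :
    ∃ x₀ ∈ Λ₀, -x₀ ∈ Λ₀ ∧ f x₀ = f (-x₀) + π := by
  have hcont := continuousOn_of_abs_sub_le_sphDist (fun y hy => (hsub y hy).1) hf
  obtain ⟨y, hy, hy_eq⟩ := exists_eq_fminus hcpt hne hcont x
  obtain ⟨z, hz, hz_eq⟩ := exists_eq_fplus hcpt hne hcont x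
  have hdist : ∀ w ∈ Λ₀, sphDist x w = angle x w := fun w hw => sphDist_eq_angle hx (hsub w hw).1
  have hlip : f y - f z ≤ angle y z :=
    sphDist_eq_angle (hsub y hy).1 (hsub z hz).1 ▸ (abs_le.mp (hf y hy z hz)).2
  have hsum : angle x y + angle x z ≤ f y - f z := by
    rw [← hdist y hy, ← hdist z hz]
    linarith
  have hpi : angle y z = π :=
    angle_eq_pi_of_angle_add_angle_le (hsub y hy).2 (hsub z hz).2 hxN
      (by rw [angle_comm y x]; linarith)
  obtain rfl := eq_neg_of_angle_eq_pi (hsub y hy).1 (hsub z hz).1 hpi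
  refine ⟨y, hy, hz, ?_⟩
  rw [angle_neg_right] at hsum
  linarith

/-- If `Λ₀` is a nonempty compact subset of the equator `{y ∈ S^m : ⟨y,N⟩ = 0}`,
`f : Λ₀ → ℝ` is `1`-Lipschitz, and `f⁺(x) = f⁻(x)` at some point `x ∈ S^m` of
the open upper hemisphere `⟨x,N⟩ > 0`, then `Λ₀` is purely lightlike: there is
`x₀ ∈ Λ₀` with `−x₀ ∈ Λ₀` and `f(x₀) = f(−x₀) + π`. -/
theorem stmt5 (m : ℕ) (N : EuclideanSpace ℝ (Fin (m + 1))) (hN : ‖N‖ = 1)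
    (Λ₀ : Set (EuclideanSpace ℝ (Fin (m + 1))))
    (hsub : ∀ y ∈ Λ₀, ‖y‖ = 1 ∧ ⟪y, N⟫ = 0)
    (hne : Λ₀.Nonempty) (hcpt : IsCompact Λ₀)
    (f : EuclideanSpace ℝ (Fin (m + 1)) → ℝ)
    (hf : ∀ y ∈ Λ₀, ∀ z ∈ Λ₀, |f y - f z| ≤ sphDist y z)
    (x : EuclideanSpace ℝ (Fin (m + 1))) (hx : ‖x‖ = 1) (hxN : 0 < ⟪x, N⟫)
    (heq : fplus Λ₀ f x = fminus Λ₀ f x) :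
    ∃ x₀ ∈ Λ₀, -x₀ ∈ Λ₀ ∧ f x₀ = f (-x₀) + π :=
  stmt5_general m N Λ₀ hsub hne hcpt f hf x hx hxN heq
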